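/- Let S > 1 and N > 2 be integers. Then there exists a non-disjoint (S^N, N, S^{N−1}, S^{N−2})-PSEDF in ℤ_{S^N}, and hence a non-disjoint (S^N, N, S^{N−1}, (N−1)S^{N−2})-SEDF in ℤ_{S^N}. -/

import Mathlib

/-- The external difference multiset `Δ(A,B) = {a - b : a ∈ A, b ∈ B}` (with multiplicity). -/
def extDiff {G : Type*} [AddGroup G] (A B : Finset G) : Multiset G :=
  A.val.bind fun a => B.val.map fun b => a - b

/-!
Take for `A i` the residues whose `i`-th base-`S` digit vanishes. For `i < j` and a shift `g`,
write a residue as `x = u + S^j t` with `u < S^j`: the `i`-th digit of `x` depends on `u` only,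
while the `j`-th digit of `x - g` is `t` plus a carry depending on `u`, modulo `S`. As `t` runs
through `S^(N-j)` values this digit vanishes `S^(N-j-1)` times, so `x ∈ A i, x - g ∈ A j` has
`S^(j-1) · S^(N-j-1) = S^(N-2)` solutions whatever `g` is; the case `j < i` is symmetric.
-/

open Finset Nat

theorem count_mul_eq_sum_count (p : ℕ → Prop) [DecidablePred p] (a b : ℕ) :
    count p (a * b) = ∑ u ∈ range a, count (fun t => p (a * t + u)) b := by
  have high_first : count p (a * b) = ∑ t ∈ range b, count (fun u => p (a * t + u)) a := by
    induction b with
    | zero => simp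
    | succ b ih => rw [mul_succ, count_add, ih, sum_range_succ]
  simp only [high_first, count_eq_card_filter_range, card_filter]
  exact sum_comm

theorem count_add_mod_eq_zero {m : ℕ} (hm : 0 < m) (e Q : ℕ) :
    count (fun t => (t + e) % m = 0) (m * Q) = Q := by
  have hv : (m - e % m + e) % m = 0 := by
    have := Nat.mod_add_div e m
    have := Nat.mod_lt e hm
    rw [show m - e % m + e = m * (1 + e / m) by rw [mul_add]; omega, Nat.mul_mod_right]
  have hiff : ∀ t, (t + e) % m = 0 ↔ t ≡ m - e % m [MOD m] := fun t => by
    rw [← hv]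
    exact ⟨fun h => Nat.ModEq.add_right_cancel' e h, fun h => h.add_right e⟩
  simp only [hiff, count_modEq_card _ hm, Nat.mul_mod_right, Nat.not_lt_zero, if_false,
    Nat.mul_div_cancel_left _ hm, add_zero]

theorem count_digit_add_eq_zero {S : ℕ} (hS : 0 < S) {k M : ℕ} (hk : k < M) (e : ℕ) :
    count (fun x => (x + e) / S ^ k % S = 0) (S ^ M) = S ^ (M - 1) := by
  have hSk : 0 < S ^ k := pow_pos hS k
  rw [show S ^ M = S ^ k * (S * S ^ (M - k - 1)) by
      rw [← pow_succ', ← pow_add]; congr 1; omega, count_mul_eq_sum_count]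
  simp only [add_assoc, Nat.mul_add_div hSk, count_add_mod_eq_zero hS, sum_const, card_range,
    smul_eq_mul, ← pow_add]
  congr 1; omega

theorem count_extDiff {G : Type*} [AddCommGroup G] [DecidableEq G] (A B : Finset G) (g : G) :
    (extDiff A B).count g = #{a ∈ A | a - g ∈ B} := by
  have hfiber : ∀ a, (B.val.map fun b => a - b).count g = if a - g ∈ B then 1 else 0 := by
    intro a
    rw [Multiset.count_map, Multiset.filter_congr (q := (a - g = ·)) fun b _ =>
      ⟨fun h => by rw [h, sub_sub_cancel], fun h => by rw [← h, sub_sub_cancel]⟩,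
      ← Multiset.count_eq_card_filter_eq]
    exact Multiset.count_eq_of_nodup B.nodup
  rw [extDiff, Multiset.count_bind, Multiset.map_congr rfl fun a _ => hfiber a, card_filter]
  rfl

theorem extDiff_eq_nsmul_univ {G : Type*} [AddCommGroup G] [Fintype G] [DecidableEq G]
    {A B : Finset G} {l : ℕ} (h : ∀ g, #{a ∈ A | a - g ∈ B} = l) :
    extDiff A B = l • (univ : Finset G).val := by
  ext g
  rw [count_extDiff, h, Multiset.count_nsmul, Multiset.count_univ, mul_one]

theorem ZMod.card_filter_val {n : ℕ} [NeZero n] (p : ℕ → Prop) [DecidablePred p] :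
    #{x : ZMod n | p x.val} = count p n := by
  rw [count_eq_card_filter_range]
  refine card_nbij' ZMod.val (fun k => (k : ZMod n)) ?_ ?_ ?_ ?_ <;> intro x hx <;>
    simp_all [ZMod.val_lt, Nat.mod_eq_of_lt]

theorem mod_pow_div_pow_mod {S N j : ℕ} (hj : j < N) (m : ℕ) :
    m % S ^ N / S ^ j % S = m / S ^ j % S := by
  rw [show S ^ N = S ^ j * S ^ (N - j) by rw [← pow_add]; congr 1; omega,
    Nat.mod_mul_right_div_self, Nat.mod_mod_of_dvd _ (dvd_pow_self S (by omega))]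

theorem pow_mul_add_div_pow_mod {S : ℕ} (hS : 0 < S) {i j : ℕ} (hij : i < j) (t y : ℕ) :
    (S ^ j * t + y) / S ^ i % S = y / S ^ i % S := by
  rw [show S ^ j * t = S ^ i * (S * (S ^ (j - i - 1) * t)) by
      rw [← mul_assoc, ← mul_assoc, ← pow_succ, ← pow_add]; congr 2; omega,
    add_comm, Nat.add_mul_div_left _ _ (pow_pos hS i), Nat.add_mul_mod_self_left]

theorem count_digit_add_eq_zero_and_digit_add_eq_zero {S : ℕ} (hS : 0 < S) {i j N : ℕ}
    (hij : i < j) (hj : j < N) (a b : ℕ) :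
    count (fun x => (x + a) / S ^ i % S = 0 ∧ (x + b) / S ^ j % S = 0) (S ^ N) = S ^ (N - 2) := by
  have hSj : 0 < S ^ j := pow_pos hS j
  rw [show S ^ N = S ^ j * (S * S ^ (N - j - 1)) by
      rw [← pow_succ', ← pow_add]; congr 1; omega, count_mul_eq_sum_count]
  have inner : ∀ u, count (fun t => (S ^ j * t + u + a) / S ^ i % S = 0 ∧
      (S ^ j * t + u + b) / S ^ j % S = 0) (S * S ^ (N - j - 1))
      = if (u + a) / S ^ i % S = 0 then S ^ (N - j - 1) else 0 := fun u => by
    simp only [add_assoc, pow_mul_add_div_pow_mod hS hij, Nat.mul_add_div hSj]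
    split_ifs with hu
    · simp only [hu, true_and, count_add_mod_eq_zero hS]
    · simp [hu]
  rw [sum_congr rfl fun u _ => inner u, sum_ite, sum_const, sum_const, smul_eq_mul, smul_eq_mul,
    mul_zero, add_zero, ← count_eq_card_filter_range, count_digit_add_eq_zero hS hij, ← pow_add]
  congr 1; omega

def digitZeroSet (S N i : ℕ) [NeZero (S ^ N)] : Finset (ZMod (S ^ N)) :=
  {x | x.val / S ^ i % S = 0}

section digitZeroSet

variable {S N : ℕ} (hS : 0 < S) [NeZero (S ^ N)]
include hS

theorem card_digitZeroSet {i : ℕ} (hi : i < N) : #(digitZeroSet S N i) = S ^ (N - 1) := by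
  rw [digitZeroSet, ZMod.card_filter_val (fun k => k / S ^ i % S = 0)]
  simpa using count_digit_add_eq_zero hS hi 0

theorem card_filter_sub_mem_digitZeroSet {i j : ℕ} (hi : i < N) (hj : j < N) (hij : i ≠ j)
    (g : ZMod (S ^ N)) :
    #{a ∈ digitZeroSet S N i | a - g ∈ digitZeroSet S N j} = S ^ (N - 2) := by
  have hval : ∀ x : ZMod (S ^ N), (x - g).val / S ^ j % S = (x.val + (-g).val) / S ^ j % S :=
    fun x => by rw [sub_eq_add_neg, ZMod.val_add, mod_pow_div_pow_mod hj]
  simp only [digitZeroSet, filter_filter, mem_filter, mem_univ, true_and, hval]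
  rw [ZMod.card_filter_val (fun k => k / S ^ i % S = 0 ∧ (k + (-g).val) / S ^ j % S = 0)]
  rcases lt_or_gt_of_ne hij with h | h
  · simpa using count_digit_add_eq_zero_and_digit_add_eq_zero hS h hj 0 (-g).val
  · simpa only [and_comm, add_zero] using
      count_digit_add_eq_zero_and_digit_add_eq_zero hS h hi (-g).val 0

end digitZeroSet

/-- for integers `S > 1` and `N > 2` there exists a non-disjoint
`(S^N, N, S^{N-1}, S^{N-2})`-PSEDF in `ℤ_{S^N}`, and hence a non-disjoint
`(S^N, N, S^{N-1}, (N-1)·S^{N-2})`-SEDF in `ℤ_{S^N}`. -/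
theorem stmt_11 (S N : ℕ) (hS : 1 < S) :
    haveI : NeZero (S ^ N) := ⟨(pow_pos (by omega) N).ne'⟩
    ∃ A : Fin N → Finset (ZMod (S ^ N)),
      (∀ i, (A i).card = S ^ (N - 1)) ∧
      (∀ i j, i ≠ j → extDiff (A i) (A j)
        = S ^ (N - 2) • (Finset.univ : Finset (ZMod (S ^ N))).val) ∧
      (∀ i, ∑ j ∈ Finset.univ.erase i, extDiff (A i) (A j)
        = ((N - 1) * S ^ (N - 2)) • (Finset.univ : Finset (ZMod (S ^ N))).val) := by
  have hS0 : 0 < S := by omega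
  have : NeZero (S ^ N) := ⟨(pow_pos hS0 N).ne'⟩
  have pairwise : ∀ i j : Fin N, i ≠ j → extDiff (digitZeroSet S N i) (digitZeroSet S N j)
      = S ^ (N - 2) • (univ : Finset (ZMod (S ^ N))).val := fun i j hij =>
    extDiff_eq_nsmul_univ <|
      card_filter_sub_mem_digitZeroSet hS0 i.isLt j.isLt (Fin.val_ne_of_ne hij)
  refine ⟨fun i => digitZeroSet S N i, fun i => card_digitZeroSet hS0 i.isLt, pairwise, ?_⟩
  intro i
  rw [sum_congr rfl fun j hj => pairwise i j (ne_of_mem_erase hj).symm, sum_const,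
    card_erase_of_mem (mem_univ i), Finset.card_univ, Fintype.card_fin, smul_smul]
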